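/- arXiv:1407.5047 — 4 statements merged into one kernel-verified Lean document; each statement's English description precedes it below -/
import Mathlib

section
/- Let A be a 3×3 real matrix, let 0 < q < 1 and κ ∈ ℝ. Suppose: (i) det A = q^{−3κ}; (ii) q^{1−2κ} is a root of the characteristic polynomial of adjugate(A); (iii) every complex root λ of the characteristic polynomial of A (viewed over ℂ) satisfies |λ| > 1. Then κ > 1/2. -/
/-!
If `adjugate A *ᵥ v = μ • v` with `μ ≠ 0`, then applying `A` gives `μ • A *ᵥ v = det A • v`, so
`λ = det A / μ` is an eigenvalue of `A`. As `det A` is the product of all eigenvalues of `A`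
(over `ℂ`, with multiplicity), `μ` is the product of the remaining ones, each of modulus `> 1`.
Hence `q ^ (1 - 2κ) = μ > 1`, which for `0 < q < 1` forces `1 - 2κ < 0`.
-/

open Matrix Polynomial

theorem one_lt_norm_multiset_prod {K : Type*} [NormedField K] {s : Multiset K} (hs : s ≠ 0)
    (h : ∀ x ∈ s, 1 < ‖x‖) : 1 < ‖s.prod‖ := by
  induction s using Multiset.induction_on with
  | empty => exact absurd rfl hs
  | cons a t ih =>
    rw [Multiset.prod_cons, norm_mul]
    rcases eq_or_ne t 0 with rfl | ht
    · simpa using h a (Multiset.mem_cons_self a 0)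
    · exact one_lt_mul_of_lt_of_le (h a (Multiset.mem_cons_self a t))
        (ih ht fun x hx => h x (Multiset.mem_cons_of_mem hx)).le

namespace Matrix

section Field

variable {n K : Type*} [Fintype n] [DecidableEq n] [Field K]

theorem isRoot_charpoly_iff_exists_mulVec_eq_smul {M : Matrix n n K} {t : K} :
    (charpoly M).IsRoot t ↔ ∃ v ≠ 0, M *ᵥ v = t • v := by
  rw [IsRoot.def, eval_charpoly, ← exists_mulVec_eq_zero_iff]
  simp only [sub_mulVec, sub_eq_zero, scalar_apply, ← smul_one_eq_diagonal, smul_mulVec,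
    one_mulVec, eq_comm (a := t • _)]

theorem isRoot_charpoly_zero_iff {M : Matrix n n K} : (charpoly M).IsRoot 0 ↔ M.det = 0 := by
  rw [isRoot_charpoly_iff_exists_mulVec_eq_smul, ← exists_mulVec_eq_zero_iff]
  simp only [zero_smul]

theorem isRoot_charpoly_det_div_of_isRoot_charpoly_adjugate {M : Matrix n n K} {μ : K}
    (hμ : μ ≠ 0) (h : (charpoly M.adjugate).IsRoot μ) : (charpoly M).IsRoot (M.det / μ) := by
  obtain ⟨v, hv, hadj⟩ := isRoot_charpoly_iff_exists_mulVec_eq_smul.1 h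
  refine isRoot_charpoly_iff_exists_mulVec_eq_smul.2 ⟨v, hv, ?_⟩
  have hdet : μ • M *ᵥ v = M.det • v := by
    rw [← mulVec_smul, ← hadj, mulVec_mulVec, mul_adjugate, smul_mulVec, one_mulVec]
  rw [div_eq_inv_mul, mul_smul, ← hdet, smul_smul, inv_mul_cancel₀ hμ, one_smul]

theorem exists_mem_roots_eq_prod_erase_of_isRoot_charpoly_adjugate [DecidableEq K]
    {M : Matrix n n K} (hM : (charpoly M).Splits) (hdet : M.det ≠ 0) {μ : K} (hμ : μ ≠ 0)
    (h : (charpoly M.adjugate).IsRoot μ) :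
    ∃ c ∈ (charpoly M).roots, μ = ((charpoly M).roots.erase c).prod := by
  have hc : M.det / μ ∈ (charpoly M).roots :=
    (mem_roots (charpoly_monic M).ne_zero).2
      (isRoot_charpoly_det_div_of_isRoot_charpoly_adjugate hμ h)
  refine ⟨M.det / μ, hc, mul_left_cancel₀ (div_ne_zero hdet hμ) ?_⟩
  rw [Multiset.prod_erase hc, ← det_eq_prod_roots_charpoly_of_splits hM, div_mul_cancel₀ _ hμ]

end Field

theorem one_lt_norm_of_isRoot_charpoly_adjugate {n K : Type*} [Fintype n] [DecidableEq n]
    [NormedField K] [IsAlgClosed K] (hn : 2 ≤ Fintype.card n) {M : Matrix n n K}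
    (hM : ∀ c, (charpoly M).IsRoot c → 1 < ‖c‖) {μ : K} (h : (charpoly M.adjugate).IsRoot μ) :
    1 < ‖μ‖ := by
  classical
  have hroots : ∀ c ∈ (charpoly M).roots, 1 < ‖c‖ := fun c hc => hM c (isRoot_of_mem_roots hc)
  have hdet : M.det ≠ 0 := by
    rw [det_eq_prod_roots_charpoly]
    exact Multiset.prod_ne_zero fun h0 => (hroots 0 h0).not_ge (by simp)
  have hμ : μ ≠ 0 := by
    rintro rfl
    rw [isRoot_charpoly_zero_iff, det_adjugate] at h
    exact hdet (eq_zero_of_pow_eq_zero h)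
  obtain ⟨c, hc, rfl⟩ :=
    exists_mem_roots_eq_prod_erase_of_isRoot_charpoly_adjugate (IsAlgClosed.splits _) hdet hμ h
  refine one_lt_norm_multiset_prod ?_ fun x hx => hroots x (Multiset.mem_of_mem_erase hx)
  rw [← Multiset.card_pos, Multiset.card_erase_of_mem hc,
    ← (IsAlgClosed.splits _).natDegree_eq_card_roots, charpoly_natDegree_eq_dim,
    Nat.pred_eq_sub_one]
  omega

end Matrix

theorem stmt6_general (A : Matrix (Fin 3) (Fin 3) ℝ) (q κ : ℝ) (hq0 : 0 < q) (hq1 : q < 1)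
    (hadj : (Matrix.charpoly A.adjugate).IsRoot (q ^ ((1 : ℝ) - 2 * κ)))
    (hrep : ∀ μ : ℂ, ((Matrix.charpoly A).map (algebraMap ℝ ℂ)).IsRoot μ →
      1 < ‖μ‖) :
    κ > 1 / 2 := by
  set μ := q ^ ((1 : ℝ) - 2 * κ)
  have hB : ∀ c, (charpoly (A.map (algebraMap ℝ ℂ))).IsRoot c → 1 < ‖c‖ := by
    rwa [charpoly_map]
  have hμB : (charpoly (A.map (algebraMap ℝ ℂ)).adjugate).IsRoot (algebraMap ℝ ℂ μ) := by
    rw [← RingHom.mapMatrix_apply, ← RingHom.map_adjugate, RingHom.mapMatrix_apply, charpoly_map]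
    exact hadj.map
  have hμpos : 0 < μ := Real.rpow_pos_of_pos hq0 _
  have hμ : 1 < μ := by
    simpa [abs_of_pos hμpos] using
      one_lt_norm_of_isRoot_charpoly_adjugate (by simp) hB hμB
  have hexp : 1 - 2 * κ < 0 := by
    by_contra! h
    exact (Real.rpow_le_one hq0.le hq1.le h).not_gt hμ
  linarith

/-- Lower bound for the self-similarity exponent: if `A` is a real 3×3 matrix
with `det A = q^(−3κ)` (`0 < q < 1`), `q^(1−2κ)` a root of the characteristic
polynomial of `adjugate A`, and all complex eigenvalues of `A` of modulus
`> 1`, then `κ > 1/2`. -/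
theorem stmt6 (A : Matrix (Fin 3) (Fin 3) ℝ) (q κ : ℝ) (hq0 : 0 < q) (hq1 : q < 1)
    (hdet : A.det = q ^ (-(3 : ℝ) * κ))
    (hadj : (Matrix.charpoly A.adjugate).IsRoot (q ^ ((1 : ℝ) - 2 * κ)))
    (hrep : ∀ μ : ℂ, ((Matrix.charpoly A).map (algebraMap ℝ ℂ)).IsRoot μ →
      1 < ‖μ‖) :
    κ > 1 / 2 :=
  stmt6_general A q κ hq0 hq1 hadj hrep
end

section
/- Suppose the pair of smooth maps v, ω : ℝ × ℝ³ → ℝ³ solves the vorticity form of the 3D incompressible Euler equations, and let β : ℝ → ℝ³ be smooth. Then the pair v', ω' defined by v'(t,x) = v(t, x − β(t)) + β'(t) and ω'(t,x) = ω(t, x − β(t)) also solves the vorticity form of the 3D incompressible Euler equations. -/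
/-- Partial derivative in direction `i` of a scalar function on `ℝ³`. -/
noncomputable def pd3 (i : Fin 3) (f : (Fin 3 → ℝ) → ℝ) (x : Fin 3 → ℝ) : ℝ :=
  fderiv ℝ f x (Pi.single i 1)

/-- Divergence of a vector field on `ℝ³`. -/
noncomputable def div3 (u : (Fin 3 → ℝ) → (Fin 3 → ℝ)) (x : Fin 3 → ℝ) : ℝ :=
  ∑ i, pd3 i (fun y => u y i) x

/-- Curl of a vector field on `ℝ³` (cyclic indices in `Fin 3`). -/
noncomputable def curl3 (u : (Fin 3 → ℝ) → (Fin 3 → ℝ)) (x : Fin 3 → ℝ) : Fin 3 → ℝ :=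
  fun i =>
    fderiv ℝ (fun y => u y (i + 2)) x (Pi.single (i + 1) 1) -
    fderiv ℝ (fun y => u y (i + 1)) x (Pi.single (i + 2) 1)

/-- The pair `(v, ω)` solves the vorticity form of 3D incompressible Euler:
`∂ₜω + (v·∇)ω = (ω·∇)v − (∇·v)ω`, `∇·ω = 0`, `∇×v = ω`, `∇·v = 0`. -/
def EulerVorticity (v ω : ℝ → (Fin 3 → ℝ) → (Fin 3 → ℝ)) : Prop :=
  ∀ t : ℝ, ∀ x : Fin 3 → ℝ,
    (deriv (fun s => ω s x) t +
        (fun i => ∑ j, v t x j * pd3 j (fun y => ω t y i) x) =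
      (fun i => ∑ j, ω t x j * pd3 j (fun y => v t y i) x) - div3 (v t) x • ω t x) ∧
    div3 (ω t) x = 0 ∧
    curl3 (v t) x = ω t x ∧
    div3 (v t) x = 0

lemma fderiv_shift (f : (Fin 3 → ℝ) → ℝ) (c x : Fin 3 → ℝ)
    (hf : DifferentiableAt ℝ f (x - c)) :
    fderiv ℝ (fun y => f (y - c)) x = fderiv ℝ f (x - c) := by
  have h : HasFDerivAt (fun y : Fin 3 → ℝ => y - c)
      (ContinuousLinearMap.id ℝ (Fin 3 → ℝ)) x := (hasFDerivAt_id x).sub_const c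
  have h2 := (hf.hasFDerivAt.comp x h).fderiv
  simpa [Function.comp_def] using h2

lemma single_decomp (u : Fin 3 → ℝ) :
    u = ∑ j, u j • (Pi.single j 1 : Fin 3 → ℝ) := by
  ext k
  simp [Finset.sum_apply, Pi.single_apply]

/-- The symmetry `shake` of 3D incompressible Euler: translating space by an
arbitrary smooth function `β` of time and adding `β'(t)` to the velocity maps
solutions of the vorticity form to solutions. -/
theorem stmt12 (v ω : ℝ → (Fin 3 → ℝ) → (Fin 3 → ℝ))
    (hv : ContDiff ℝ (⊤ : ℕ∞) (fun p : ℝ × (Fin 3 → ℝ) => v p.1 p.2))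
    (hω : ContDiff ℝ (⊤ : ℕ∞) (fun p : ℝ × (Fin 3 → ℝ) => ω p.1 p.2))
    (hE : EulerVorticity v ω) (β : ℝ → (Fin 3 → ℝ)) (hβ : ContDiff ℝ (⊤ : ℕ∞) β) :
    EulerVorticity (fun t x => v t (x - β t) + deriv β t)
      (fun t x => ω t (x - β t)) := by
  have hF : Differentiable ℝ (fun p : ℝ × (Fin 3 → ℝ) => ω p.1 p.2) :=
    hω.differentiable (by simp)
  have hG : Differentiable ℝ (fun p : ℝ × (Fin 3 → ℝ) => v p.1 p.2) :=
    hv.differentiable (by simp)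
  have hβd : Differentiable ℝ β := hβ.differentiable (by simp)
  -- slice differentiability
  have hωt : ∀ s z, DifferentiableAt ℝ (ω s) z := by
    intro s z
    exact (hF (s, z)).comp z ((differentiableAt_const s).prodMk differentiableAt_id)
  have hvt : ∀ s z, DifferentiableAt ℝ (v s) z := by
    intro s z
    exact (hG (s, z)).comp z ((differentiableAt_const s).prodMk differentiableAt_id)
  have hωti : ∀ s z i, DifferentiableAt ℝ (fun w => ω s w i) z := by
    intro s z i
    exact ((ContinuousLinearMap.proj i : (Fin 3 → ℝ) →L[ℝ] ℝ).differentiableAt).comp z (hωt s z)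
  have hvti : ∀ s z i, DifferentiableAt ℝ (fun w => v s w i) z := by
    intro s z i
    exact ((ContinuousLinearMap.proj i : (Fin 3 → ℝ) →L[ℝ] ℝ).differentiableAt).comp z (hvt s z)
  intro t x
  set y := x - β t with hy
  obtain ⟨h1, h2, h3, h4⟩ := hE t y
  -- spatial derivative shift identities, pointwise (applied to an arbitrary direction)
  have e1 : ∀ (i : Fin 3) (w : Fin 3 → ℝ),
      fderiv ℝ (fun z => ω t (z - β t) i) x w = fderiv ℝ (fun z => ω t z i) y w := by
    intro i w
    rw [show (fun z => ω t (z - β t) i) = (fun z => (fun z' => ω t z' i) (z - β t)) from rfl,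
      fderiv_shift _ _ _ (hωti t y i)]
  have e2 : ∀ (i : Fin 3) (w : Fin 3 → ℝ),
      fderiv ℝ (fun z => (v t (z - β t) + deriv β t) i) x w
        = fderiv ℝ (fun z => v t z i) y w := by
    intro i w
    have hc : (fun z => (v t (z - β t) + deriv β t) i)
        = fun z => (fun z' => v t z' i) (z - β t) + deriv β t i := rfl
    rw [hc, fderiv_add_const, fderiv_shift _ _ _ (hvti t y i)]
  have e1' : ∀ j i, pd3 j (fun z => ω t (z - β t) i) x = pd3 j (fun z => ω t z i) y := by
    intro j i; exact e1 i (Pi.single j 1)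
  have e2' : ∀ j i, pd3 j (fun z => (v t (z - β t) + deriv β t) i) x
      = pd3 j (fun z => v t z i) y := by
    intro j i; exact e2 i (Pi.single j 1)
  have ediv : div3 (fun z => v t (z - β t) + deriv β t) x = div3 (v t) y := by
    unfold div3
    exact Finset.sum_congr rfl fun i _ => e2' i i
  have edivω : div3 (fun z => ω t (z - β t)) x = div3 (ω t) y := by
    unfold div3
    exact Finset.sum_congr rfl fun i _ => e1' i i
  -- time derivative chain rule
  set L := fderiv ℝ (fun p : ℝ × (Fin 3 → ℝ) => ω p.1 p.2) (t, y) with hL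
  have hFp : HasFDerivAt (fun p : ℝ × (Fin 3 → ℝ) => ω p.1 p.2) L (t, y) :=
    (hF (t, y)).hasFDerivAt
  have hc : HasDerivAt (fun s => (s, x - β s)) ((1 : ℝ), -deriv β t) t := by
    have := (hasDerivAt_const t x).sub ((hβd t).hasDerivAt)
    simpa using (hasDerivAt_id t).prodMk this
  have hA : HasDerivAt (fun s => ω s (x - β s)) (L (1, -deriv β t)) t :=
    by have := hFp.comp_hasDerivAt t hc; exact this
  have hB : HasDerivAt (fun s => ω s y) (L (1, 0)) t :=
    by have := hFp.comp_hasDerivAt t ((hasDerivAt_id t).prodMk (hasDerivAt_const t y)); exact this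
  -- slice fderiv
  have hslice : HasFDerivAt (ω t)
      (L.comp (((0 : (Fin 3 → ℝ) →L[ℝ] ℝ)).prod (ContinuousLinearMap.id ℝ (Fin 3 → ℝ)))) y :=
    hFp.comp y ((hasFDerivAt_const t y).prodMk (hasFDerivAt_id y))
  have hLu : ∀ u : Fin 3 → ℝ, L (0, u) = fderiv ℝ (ω t) y u := by
    intro u
    rw [hslice.fderiv]
    simp
  have hcomp : ∀ (i : Fin 3) (u : Fin 3 → ℝ),
      fderiv ℝ (fun z => ω t z i) y u = fderiv ℝ (ω t) y u i := by
    intro i u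
    have h := ((ContinuousLinearMap.proj i : (Fin 3 → ℝ) →L[ℝ] ℝ).hasFDerivAt.comp y
      (hωt t y).hasFDerivAt).fderiv
    have h' : fderiv ℝ (fun z => ω t z i) y
        = (ContinuousLinearMap.proj i : (Fin 3 → ℝ) →L[ℝ] ℝ).comp (fderiv ℝ (ω t) y) := h
    rw [h']
    rfl
  have hexp : ∀ (u : Fin 3 → ℝ) (i : Fin 3),
      fderiv ℝ (ω t) y u i = ∑ j, u j * pd3 j (fun z => ω t z i) y := by
    intro u i
    conv_lhs => rw [single_decomp u]
    rw [map_sum]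
    rw [Finset.sum_apply]
    refine Finset.sum_congr rfl fun j _ => ?_
    rw [map_smul]
    simp only [Pi.smul_apply, smul_eq_mul]
    rw [← hcomp i (Pi.single j 1)]
    rfl
  have hts : deriv (fun s => ω s (x - β s)) t
      = deriv (fun s => ω s y) t - L (0, deriv β t) := by
    rw [hA.deriv, hB.deriv]
    rw [show ((1 : ℝ), -deriv β t) = ((1 : ℝ), (0 : Fin 3 → ℝ)) - (0, deriv β t) from by
      simp [Prod.ext_iff]]
    rw [map_sub]
  refine ⟨?_, ?_, ?_, ?_⟩
  · -- main evolution equation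
    funext i
    have h1i := congrFun h1 i
    simp only [Pi.add_apply, Pi.sub_apply, Pi.smul_apply, smul_eq_mul] at h1i ⊢
    simp only [← hy]
    rw [ediv]
    have hderiv_i : deriv (fun s => ω s (x - β s)) t i
        = deriv (fun s => ω s y) t i - ∑ j, deriv β t j * pd3 j (fun z => ω t z i) y := by
      rw [congrFun hts i]
      simp only [Pi.sub_apply]
      rw [hLu, hexp]
    rw [hderiv_i]
    have hsum : ∑ j, (v t y j + deriv β t j) * pd3 j (fun z => ω t (z - β t) i) x
        = (∑ j, v t y j * pd3 j (fun z => ω t z i) y)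
          + ∑ j, deriv β t j * pd3 j (fun z => ω t z i) y := by
      rw [← Finset.sum_add_distrib]
      refine Finset.sum_congr rfl fun j _ => ?_
      rw [e1' j i]
      simp [add_mul]
    rw [hsum]
    have e2'' : ∀ j i, pd3 j (fun z => v t (z - β t) i + deriv β t i) x
        = pd3 j (fun z => v t z i) y := e2'
    have hsum2 : ∑ j, ω t y j * pd3 j (fun z => v t (z - β t) i + deriv β t i) x
        = ∑ j, ω t y j * pd3 j (fun z => v t z i) y := by
      refine Finset.sum_congr rfl fun j _ => ?_
      rw [e2'' j i]
    rw [hsum2]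
    linarith [h1i]
  · rw [edivω]; exact h2
  · funext i
    have h3i := congrFun h3 i
    unfold curl3 at h3i ⊢
    rw [e2 (i + 2) (Pi.single (i + 1) 1), e2 (i + 1) (Pi.single (i + 2) 1)]
    exact h3i
  · rw [ediv]; exact h4
end

section
/- Let T > 0, c ∈ ℝ, R ≥ 0, and e ∈ ℝ with e − c > −1. Let J : (−T, 0) → [0, ∞) be continuous, and suppose: (i) for every t ∈ (−T, 0), limsup_{h → 0⁻} (J(t+h) − J(t))/|h| ≤ c·|t|⁻¹·J(t) + R·|t|^e; and (ii) lim_{t → 0⁻} |t|^{−c}·J(t) = 0. Then J(t) ≤ (R/(e − c + 1))·|t|^{e+1} for all t ∈ (−T, 0). -/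
open Set Filter Topology

/-!
With `u = -t` and `g u = J (-u)`, hypothesis (i) becomes a bound on the right Dini derivative,
`D⁺g(u) ≤ c g(u)/u + R u^e`. For `R' > R`, the solution `A u^c + R'/(e-c+1) u^(e+1)` of
`y' = c y/u + R' u^e` that agrees with `g` at `u₀` is a strict barrier, so it dominates `g` on
`[u₀, u₁]`; letting `R' → R` gives
`g u₁ ≤ (u₀^(-c) g u₀ - R/(e-c+1) u₀^(e-c+1)) u₁^c + R/(e-c+1) u₁^(e+1)`.
As `u₀ → 0⁺` both `u₀`-terms vanish, by (ii) and because `e - c + 1 > 0`.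
-/

section LinearDifferentialInequality

variable {c R e : ℝ}

theorem hasDerivAt_linearODE_rpow_solution (A : ℝ) (hk : e - c + 1 ≠ 0) {x : ℝ} (hx : 0 < x) :
    HasDerivAt (fun y => A * y ^ c + R / (e - c + 1) * y ^ (e + 1))
      (c * x⁻¹ * (A * x ^ c + R / (e - c + 1) * x ^ (e + 1)) + R * x ^ e) x := by
  have hc := (Real.hasDerivAt_rpow_const (p := c) (Or.inl hx.ne')).const_mul A
  have he := (Real.hasDerivAt_rpow_const (p := e + 1) (Or.inl hx.ne')).const_mul (R / (e - c + 1))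
  refine (hc.add he).congr_deriv ?_
  rw [Real.rpow_sub hx, Real.rpow_one, add_sub_cancel_right, Real.rpow_add hx, Real.rpow_one]
  field_simp
  ring

theorem le_linearODE_rpow_solution_of_lt {g : ℝ → ℝ} {a b R' : ℝ} (ha : 0 < a) (hab : a ≤ b)
    (hRR' : R < R') (hk : e - c + 1 ≠ 0) (hg : ContinuousOn g (Icc a b))
    (hslope : ∀ x ∈ Ico a b, ∀ ε > 0, ∀ᶠ z in 𝓝[>] x, slope g x z ≤ c * x⁻¹ * g x + R * x ^ e + ε) :
    g b ≤ (a ^ (-c) * g a - R' / (e - c + 1) * a ^ (e - c + 1)) * b ^ c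
      + R' / (e - c + 1) * b ^ (e + 1) := by
  set A := a ^ (-c) * g a - R' / (e - c + 1) * a ^ (e - c + 1)
  set B : ℝ → ℝ := fun y => A * y ^ c + R' / (e - c + 1) * y ^ (e + 1)
  have hB : ∀ x ∈ Icc a b, HasDerivAt B (c * x⁻¹ * B x + R' * x ^ e) x := fun x hx =>
    hasDerivAt_linearODE_rpow_solution A hk (ha.trans_le hx.1)
  have hBa : B a = g a := by
    have h1 : a ^ (-c) * a ^ c = 1 := by rw [← Real.rpow_add ha]; simp
    have h2 : a ^ (e - c + 1) * a ^ c = a ^ (e + 1) := by rw [← Real.rpow_add ha]; ring_nf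
    simp only [B, A]
    linear_combination g a * h1 - R' / (e - c + 1) * h2
  refine image_le_of_liminf_slope_right_lt_deriv_boundary' hg
    (f' := fun x => c * x⁻¹ * g x + (R + R') / 2 * x ^ e) ?_ hBa.ge
    (fun x hx => (hB x hx).continuousAt.continuousWithinAt)
    (fun x hx => (hB x (Ico_subset_Icc_self hx)).hasDerivWithinAt) ?_ (right_mem_Icc.2 hab)
  · intro x hx r hr
    have hxe : 0 < x ^ e := Real.rpow_pos_of_pos (ha.trans_le hx.1) e
    refine (hslope x hx ((R' - R) / 2 * x ^ e) (by nlinarith)).frequently.mono fun z hz => ?_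
    linarith
  · intro x hx hgB
    have hxe : 0 < x ^ e := Real.rpow_pos_of_pos (ha.trans_le hx.1) e
    simp only [hgB]
    nlinarith

theorem le_linearODE_rpow_solution {g : ℝ → ℝ} {a b : ℝ} (ha : 0 < a) (hab : a ≤ b)
    (hk : e - c + 1 ≠ 0) (hg : ContinuousOn g (Icc a b))
    (hslope : ∀ x ∈ Ico a b, ∀ ε > 0, ∀ᶠ z in 𝓝[>] x, slope g x z ≤ c * x⁻¹ * g x + R * x ^ e + ε) :
    g b ≤ (a ^ (-c) * g a - R / (e - c + 1) * a ^ (e - c + 1)) * b ^ c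
      + R / (e - c + 1) * b ^ (e + 1) := by
  have hcont : Continuous fun R' => (a ^ (-c) * g a - R' / (e - c + 1) * a ^ (e - c + 1)) * b ^ c
      + R' / (e - c + 1) * b ^ (e + 1) := by fun_prop
  exact ge_of_tendsto ((hcont.tendsto R).mono_left (nhdsWithin_le_nhds (s := Ioi R)))
    (eventually_nhdsWithin_of_forall fun _ hR' =>
      le_linearODE_rpow_solution_of_lt ha hab hR' hk hg hslope)

end LinearDifferentialInequality

theorem eventually_slope_comp_neg_le {J : ℝ → ℝ} {T x L : ℝ} (hx₀ : 0 ≤ x) (hxT : x < T)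
    (hJ : ∃ δ : ℝ, 0 < δ ∧ ∀ h : ℝ, h < 0 → |h| < δ → -x + h ∈ Ioo (-T) 0 →
      (J (-x + h) - J (-x)) / |h| ≤ L) :
    ∀ᶠ z in 𝓝[>] x, slope (fun u => J (-u)) x z ≤ L := by
  obtain ⟨δ, hδ, hJ⟩ := hJ
  filter_upwards [Ioo_mem_nhdsGT (lt_min (lt_add_of_pos_right x hδ) hxT)] with z ⟨hxz, hz⟩
  obtain ⟨hzδ, hzT⟩ := lt_min_iff.1 hz
  have hxz' : |x - z| = z - x := by rw [abs_sub_comm, abs_of_pos (sub_pos.2 hxz)]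
  have := hJ (x - z) (sub_neg.2 hxz) (by rw [hxz']; linarith) (by constructor <;> linarith)
  rw [show -x + (x - z) = -z by ring, hxz'] at this
  rwa [slope_def_field]

theorem stmt13_general (T c R e : ℝ) (hec : -1 < e - c)
    (J : ℝ → ℝ)
    (hcont : ContinuousOn J (Ioo (-T) 0))
    (hgrow : ∀ t ∈ Ioo (-T) (0 : ℝ), ∀ ε : ℝ, 0 < ε → ∃ δ : ℝ, 0 < δ ∧
      ∀ h : ℝ, h < 0 → |h| < δ → t + h ∈ Ioo (-T) (0 : ℝ) →
        (J (t + h) - J t) / |h| ≤ c * |t|⁻¹ * J t + R * |t| ^ e + ε)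
    (hlim : Tendsto (fun t => |t| ^ (-c) * J t) (nhdsWithin 0 (Iio 0)) (nhds 0)) :
    ∀ t ∈ Ioo (-T) (0 : ℝ), J t ≤ (R / (e - c + 1)) * |t| ^ (e + 1) := by
  intro t ⟨htT, ht⟩
  have hk : 0 < e - c + 1 := by linarith
  set g : ℝ → ℝ := fun u => J (-u)
  have hneg : MapsTo Neg.neg (Ioo 0 T) (Ioo (-T) 0) := fun x hx =>
    ⟨neg_lt_neg hx.2, neg_lt_zero.2 hx.1⟩
  have hslope : ∀ x ∈ Ioo 0 T, ∀ ε > 0,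
      ∀ᶠ z in 𝓝[>] x, slope g x z ≤ c * x⁻¹ * g x + R * x ^ e + ε := by
    intro x hx ε hε
    have := hgrow (-x) (hneg hx) ε hε
    rw [abs_neg, abs_of_pos hx.1] at this
    exact eventually_slope_comp_neg_le hx.1.le hx.2 this
  have hbound : ∀ᶠ u₀ in 𝓝[>] 0, g (-t) ≤ (u₀ ^ (-c) * g u₀ - R / (e - c + 1) * u₀ ^ (e - c + 1))
      * (-t) ^ c + R / (e - c + 1) * (-t) ^ (e + 1) := by
    filter_upwards [Ioo_mem_nhdsGT (neg_pos.2 ht)] with u₀ ⟨hu₀, hu₀t⟩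
    have hsub : Icc u₀ (-t) ⊆ Ioo 0 T := Icc_subset_Ioo hu₀ (by linarith)
    exact le_linearODE_rpow_solution hu₀ hu₀t.le hk.ne'
      ((hcont.comp continuous_neg.continuousOn hneg).mono hsub)
      fun x hx => hslope x (hsub (Ico_subset_Icc_self hx))
  have hweighted : Tendsto (fun u => u ^ (-c) * g u) (𝓝[>] 0) (𝓝 0) := by
    refine (hlim.comp (by simpa using tendsto_neg_nhdsGT_neg (a := (0 : ℝ)))).congr' ?_
    filter_upwards [self_mem_nhdsWithin] with u (hu : 0 < u)
    simp [g, abs_of_pos hu]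
  have hpow : Tendsto (fun u : ℝ => u ^ (e - c + 1)) (𝓝[>] 0) (𝓝 0) := by
    simpa [Real.zero_rpow hk.ne'] using
      (Real.continuousAt_rpow_const 0 _ (Or.inr hk.le)).tendsto.mono_left nhdsWithin_le_nhds
  simpa [g, abs_of_neg ht] using
    ge_of_tendsto (((hweighted.sub (hpow.const_mul _)).mul_const _).add_const _) hbound

/-- Singular Gronwall-type lemma: if `J : (−T,0) → [0,∞)` is continuous, its
left-sided upper derivative satisfies
`limsup_{h→0⁻} (J(t+h)−J(t))/|h| ≤ c|t|⁻¹ J(t) + R|t|^e` (stated here in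
ε-form), `e − c > −1`, and `|t|^{−c} J(t) → 0` as `t → 0⁻`, then
`J(t) ≤ (R/(e−c+1)) |t|^{e+1}` on `(−T,0)`. -/
theorem stmt13 (T c R e : ℝ) (hT : 0 < T) (hR : 0 ≤ R) (hec : -1 < e - c)
    (J : ℝ → ℝ)
    (hcont : ContinuousOn J (Ioo (-T) 0))
    (hnonneg : ∀ t ∈ Ioo (-T) (0 : ℝ), 0 ≤ J t)
    (hgrow : ∀ t ∈ Ioo (-T) (0 : ℝ), ∀ ε : ℝ, 0 < ε → ∃ δ : ℝ, 0 < δ ∧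
      ∀ h : ℝ, h < 0 → |h| < δ → t + h ∈ Ioo (-T) (0 : ℝ) →
        (J (t + h) - J t) / |h| ≤ c * |t|⁻¹ * J t + R * |t| ^ e + ε)
    (hlim : Tendsto (fun t => |t| ^ (-c) * J t) (nhdsWithin 0 (Iio 0)) (nhds 0)) :
    ∀ t ∈ Ioo (-T) (0 : ℝ), J t ≤ (R / (e - c + 1)) * |t| ^ (e + 1) :=
  stmt13_general T c R e hec J hcont hgrow hlim
end

section
/- Let κ > 0, δ > 0, C ≥ 0, M > 0, and fix t < 0. Suppose that for each s with t ≤ s < 0 we are given a map φ(s,t) : ℝ³ → ℝ³ and for t ≤ t' ≤ s < 0 maps φ(s,t') : ℝ³ → ℝ³, satisfying: (i) φ(t,t) is the identity; (ii) the cocycle property φ(s,t) = φ(s,s') ∘ φ(s',t) for t ≤ s' ≤ s < 0; and (iii) the flow estimate |φ(s,s')y − y| ≤ C·(|s'|^{−κ}|y|)^{−δ}·|y| whenever t ≤ s' ≤ s < 0 and |y| ≥ M·|s'|^κ. Then there is a constant M' > 0, depending only on C, δ, M, such that for every x ∈ ℝ³ with |x| ≥ M'·|t|^κ, the limit lim_{s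 → 0⁻} φ(s,t)x exists in ℝ³. -/
/-!
Once `|t|^{-κ}|x|` is large, the flow estimate from time `t` moves `x` by at most `|x|/2`, so every
`y = φ(s',t)x` has norm comparable to `|x|` and stays in the region where the estimate applies.
The cocycle property writes the increment `φ(s,t)x − φ(s',t)x` as `φ(s,s')y − y`, which is then
at most `C|s'|^{κδ}|y|^{1−δ} ≲ |s'|^{κδ}` uniformly in `s ≥ s'`; hence `s ↦ φ(s,t)x` is Cauchy
as `s → 0⁻`.
-/

open Set Filter Topology

theorem exists_tendsto_nhdsLT_of_dist_le {E : Type*} [PseudoMetricSpace E] [CompleteSpace E]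
    {f : ℝ → E} {g : ℝ → ℝ} {a b : ℝ} (hab : a < b) (hg : Tendsto g (𝓝[<] b) (𝓝 0))
    (h : ∀ s' s, a ≤ s' → s' ≤ s → s < b → dist (f s) (f s') ≤ g s') :
    ∃ L, Tendsto f (𝓝[<] b) (𝓝 L) := by
  have hnear : ∀ᶠ s in 𝓝[<] b, s ∈ Ico a b := Ico_mem_nhdsLT hab
  have hdist : ∀ᶠ p in 𝓝[<] b ×ˢ 𝓝[<] b, dist (f p.1) (f p.2) ≤ g p.1 + g p.2 := by
    filter_upwards [prod_mem_prod hnear hnear] with ⟨u, v⟩ ⟨⟨hau, hub⟩, ⟨hav, hvb⟩⟩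
    have hgu : 0 ≤ g u := dist_self (f u) ▸ h u u hau le_rfl hub
    have hgv : 0 ≤ g v := dist_self (f v) ▸ h v v hav le_rfl hvb
    rcases le_total u v with huv | hvu
    · linarith [dist_comm (f u) (f v) ▸ h u v hau huv hvb]
    · linarith [h v u hav hvu hub]
  have hsum : Tendsto (fun p : ℝ × ℝ => g p.1 + g p.2) (𝓝[<] b ×ˢ 𝓝[<] b) (𝓝 0) := by
    simpa using (hg.comp tendsto_fst).add (hg.comp tendsto_snd)
  refine cauchy_map_iff_exists_tendsto.mp (cauchy_map_iff.mpr ⟨inferInstance, ?_⟩)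
  exact tendsto_uniformity_iff_dist_tendsto_zero.mpr
    (squeeze_zero' (Eventually.of_forall fun _ => dist_nonneg) hdist hsum)

theorem mul_rpow_neg_le_half {C δ R : ℝ} (hC : 0 ≤ C) (hδ : 0 < δ) (hR : 0 < R)
    (h : (2 * C) ^ δ⁻¹ ≤ R) : C * R ^ (-δ) ≤ 1 / 2 := by
  have h2C : 2 * C ≤ R ^ δ := by
    calc 2 * C = ((2 * C) ^ δ⁻¹) ^ δ := by
          rw [← Real.rpow_mul (by positivity), inv_mul_cancel₀ hδ.ne', Real.rpow_one]
      _ ≤ R ^ δ := by gcongr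
  rw [Real.rpow_neg hR.le, ← div_eq_mul_inv, div_le_iff₀ (by positivity)]
  linarith

noncomputable def limitRadius (C δ M : ℝ) : ℝ := max (2 * M) ((2 * C) ^ δ⁻¹)

theorem limitRadius_pos {C δ M : ℝ} (hM : 0 < M) : 0 < limitRadius C δ M :=
  lt_max_of_lt_left (by linarith)

theorem two_mul_le_limitRadius (C δ M : ℝ) : 2 * M ≤ limitRadius C δ M := le_max_left _ _

section FlowEstimate

variable {E : Type*} [NormedAddCommGroup E]

def FlowEstimate (κ δ C M t : ℝ) (φ : ℝ → ℝ → E → E) : Prop :=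
  ∀ s' s : ℝ, t ≤ s' → s' ≤ s → s < 0 → ∀ y : E, M * |s'| ^ κ ≤ ‖y‖ →
    ‖φ s s' y - y‖ ≤ C * (|s'| ^ (-κ) * ‖y‖) ^ (-δ) * ‖y‖

variable {κ δ C M t : ℝ} {φ : ℝ → ℝ → E → E}

theorem FlowEstimate.norm_sub_le_half (hf : FlowEstimate κ δ C M t φ) (hδ : 0 < δ) (hC : 0 ≤ C)
    (hM : 0 < M) (ht : t < 0) {x : E} (hx : limitRadius C δ M * |t| ^ κ ≤ ‖x‖) {s : ℝ}
    (hts : t ≤ s) (hs : s < 0) : ‖φ s t x - x‖ ≤ ‖x‖ / 2 := by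
  set R := limitRadius C δ M
  have hR : 0 < R := limitRadius_pos hM
  have htκ : 0 < |t| ^ κ := by have := abs_pos.mpr ht.ne; positivity
  have hMx : M * |t| ^ κ ≤ ‖x‖ := by
    have : M ≤ R := by linarith [two_mul_le_limitRadius C δ M]
    nlinarith
  have hRx : R ≤ |t| ^ (-κ) * ‖x‖ := by
    rwa [Real.rpow_neg (by positivity), ← div_eq_inv_mul, le_div_iff₀ htκ]
  calc ‖φ s t x - x‖ ≤ C * (|t| ^ (-κ) * ‖x‖) ^ (-δ) * ‖x‖ := hf t s le_rfl hts hs x hMx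
    _ ≤ C * R ^ (-δ) * ‖x‖ := by
        have := Real.rpow_le_rpow_of_nonpos hR hRx (neg_nonpos.mpr hδ.le)
        gcongr
    _ ≤ 1 / 2 * ‖x‖ := by
        gcongr
        exact mul_rpow_neg_le_half hC hδ hR (le_max_right _ _)
    _ = ‖x‖ / 2 := by ring

theorem FlowEstimate.norm_flow_sub_flow_le (hf : FlowEstimate κ δ C M t φ)
    (hcoc : ∀ s' s : ℝ, t ≤ s' → s' ≤ s → s < 0 → ∀ x : E, φ s s' (φ s' t x) = φ s t x)
    {x : E} {s' s : ℝ} (hts' : t ≤ s') (hs's : s' ≤ s) (hs : s < 0)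
    (hy : M * |s'| ^ κ ≤ ‖φ s' t x‖) :
    ‖φ s t x - φ s' t x‖ ≤ C * |s'| ^ (κ * δ) * (‖φ s' t x‖ ^ (-δ) * ‖φ s' t x‖) := by
  have hsplit : (|s'| ^ (-κ) * ‖φ s' t x‖) ^ (-δ) = |s'| ^ (κ * δ) * ‖φ s' t x‖ ^ (-δ) := by
    rw [Real.mul_rpow (by positivity) (norm_nonneg _), ← Real.rpow_mul (abs_nonneg _), neg_mul_neg]
  calc ‖φ s t x - φ s' t x‖ = ‖φ s s' (φ s' t x) - φ s' t x‖ := by rw [hcoc s' s hts' hs's hs]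
    _ ≤ C * (|s'| ^ (-κ) * ‖φ s' t x‖) ^ (-δ) * ‖φ s' t x‖ := hf s' s hts' hs's hs _ hy
    _ = C * |s'| ^ (κ * δ) * (‖φ s' t x‖ ^ (-δ) * ‖φ s' t x‖) := by rw [hsplit]; ring

end FlowEstimate

theorem FlowEstimate.exists_tendsto_nhdsLT {E : Type*} [NormedAddCommGroup E] [CompleteSpace E]
    {κ δ C M t : ℝ} {φ : ℝ → ℝ → E → E} (hf : FlowEstimate κ δ C M t φ)
    (hcoc : ∀ s' s : ℝ, t ≤ s' → s' ≤ s → s < 0 → ∀ x : E, φ s s' (φ s' t x) = φ s t x)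
    (hκ : 0 < κ) (hδ : 0 < δ) (hC : 0 ≤ C) (hM : 0 < M) (ht : t < 0) {x : E}
    (hx : limitRadius C δ M * |t| ^ κ ≤ ‖x‖) :
    ∃ L, Tendsto (fun s => φ s t x) (𝓝[<] 0) (𝓝 L) := by
  have htκ : 0 < |t| ^ κ := by have := abs_pos.mpr ht.ne; positivity
  have hMx : M * |t| ^ κ ≤ ‖x‖ / 2 := by
    nlinarith [two_mul_le_limitRadius C δ M]
  have hxpos : 0 < ‖x‖ := by nlinarith
  have hnorm : ∀ s, t ≤ s → s < 0 → ‖x‖ / 2 ≤ ‖φ s t x‖ ∧ ‖φ s t x‖ ≤ 3 / 2 * ‖x‖ := by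
    intro s hts hs
    have := hf.norm_sub_le_half hδ hC hM ht hx hts hs
    have := abs_norm_sub_norm_le (φ s t x) x
    constructor <;> linarith [abs_le.mp (this.trans (by assumption))]
  set K := C * ((‖x‖ / 2) ^ (-δ) * (3 / 2 * ‖x‖))
  have hpow : Tendsto (fun s : ℝ => |s| ^ (κ * δ)) (𝓝 0) (𝓝 0) := by
    simpa [Real.zero_rpow (mul_pos hκ hδ).ne'] using
      (continuous_abs.rpow_const fun _ => Or.inr (mul_pos hκ hδ).le).tendsto 0
  refine exists_tendsto_nhdsLT_of_dist_le (g := fun s => K * |s| ^ (κ * δ)) ht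
    (by simpa using (hpow.const_mul K).mono_left nhdsWithin_le_nhds) ?_
  intro s' s hts' hs's hs
  obtain ⟨hlow, hhigh⟩ := hnorm s' hts' (hs's.trans_lt hs)
  have hs't : |s'| ^ κ ≤ |t| ^ κ := by
    refine Real.rpow_le_rpow (abs_nonneg _) ?_ hκ.le
    rw [abs_of_neg ht, abs_of_neg (hs's.trans_lt hs)]
    linarith
  have hy : M * |s'| ^ κ ≤ ‖φ s' t x‖ := by nlinarith
  have hyδ : ‖φ s' t x‖ ^ (-δ) ≤ (‖x‖ / 2) ^ (-δ) :=
    Real.rpow_le_rpow_of_nonpos (by positivity) hlow (neg_nonpos.mpr hδ.le)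
  calc dist (φ s t x) (φ s' t x)
      ≤ C * |s'| ^ (κ * δ) * (‖φ s' t x‖ ^ (-δ) * ‖φ s' t x‖) := by
        rw [dist_eq_norm]; exact hf.norm_flow_sub_flow_le hcoc hts' hs's hs hy
    _ ≤ C * |s'| ^ (κ * δ) * ((‖x‖ / 2) ^ (-δ) * (3 / 2 * ‖x‖)) := by gcongr
    _ = K * |s'| ^ (κ * δ) := by ring

theorem stmt15_general (κ δ C M : ℝ) (hκ : 0 < κ) (hδ : 0 < δ) (hC : 0 ≤ C) (hM : 0 < M)
    (t : ℝ) (ht : t < 0)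
    (φ : ℝ → ℝ → EuclideanSpace ℝ (Fin 3) → EuclideanSpace ℝ (Fin 3))
    (hcoc : ∀ s' s : ℝ, t ≤ s' → s' ≤ s → s < 0 →
      ∀ x : EuclideanSpace ℝ (Fin 3), φ s s' (φ s' t x) = φ s t x)
    (hflow : ∀ s' s : ℝ, t ≤ s' → s' ≤ s → s < 0 →
      ∀ y : EuclideanSpace ℝ (Fin 3), M * |s'| ^ κ ≤ ‖y‖ →
        ‖φ s s' y - y‖ ≤ C * (|s'| ^ (-κ) * ‖y‖) ^ (-δ) * ‖y‖) :
    ∃ M' : ℝ, 0 < M' ∧ ∀ x : EuclideanSpace ℝ (Fin 3), M' * |t| ^ κ ≤ ‖x‖ →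
      ∃ L : EuclideanSpace ℝ (Fin 3),
        Tendsto (fun s => φ s t x) (nhdsWithin 0 (Iio 0)) (nhds L) :=
  ⟨limitRadius C δ M, limitRadius_pos hM, fun _ hx =>
    FlowEstimate.exists_tendsto_nhdsLT hflow hcoc hκ hδ hC hM ht hx⟩

/-- Existence of the limiting flow: if the maps `φ(s,t)` satisfy the identity
at `s = t`, the cocycle property, and the flow estimate
`|φ(s,s')y − y| ≤ C (|s'|^{−κ}|y|)^{−δ} |y|` for `|y| ≥ M|s'|^κ`, then there is
`M' > 0` (depending only on `C, δ, M`) such that `lim_{s→0⁻} φ(s,t)x` exists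
for every `x` with `|x| ≥ M'|t|^κ`. -/
theorem stmt15 (κ δ C M : ℝ) (hκ : 0 < κ) (hδ : 0 < δ) (hC : 0 ≤ C) (hM : 0 < M)
    (t : ℝ) (ht : t < 0)
    (φ : ℝ → ℝ → EuclideanSpace ℝ (Fin 3) → EuclideanSpace ℝ (Fin 3))
    (hid : ∀ x : EuclideanSpace ℝ (Fin 3), φ t t x = x)
    (hcoc : ∀ s' s : ℝ, t ≤ s' → s' ≤ s → s < 0 →
      ∀ x : EuclideanSpace ℝ (Fin 3), φ s s' (φ s' t x) = φ s t x)
    (hflow : ∀ s' s : ℝ, t ≤ s' → s' ≤ s → s < 0 →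
      ∀ y : EuclideanSpace ℝ (Fin 3), M * |s'| ^ κ ≤ ‖y‖ →
        ‖φ s s' y - y‖ ≤ C * (|s'| ^ (-κ) * ‖y‖) ^ (-δ) * ‖y‖) :
    ∃ M' : ℝ, 0 < M' ∧ ∀ x : EuclideanSpace ℝ (Fin 3), M' * |t| ^ κ ≤ ‖x‖ →
      ∃ L : EuclideanSpace ℝ (Fin 3),
        Tendsto (fun s => φ s t x) (nhdsWithin 0 (Iio 0)) (nhds L) :=
  stmt15_general κ δ C M hκ hδ hC hM t ht φ hcoc hflow
end
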